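/- Let ν ∈ ℤ_{≥0}^n and define γ_ν = ∏_{i<j} (h̊_{ij} − ν_j)^{↑(ν_i+1)} / (h̊_{ij})^{↑(ν_i+1)} as a rational function in independent variables h̊_1,…,h̊_n with h̊_{ij} = h̊_i − h̊_j. Let q̌_i act on rational functions by swapping h̊_i and h̊_{i+1}. Then q̌_i(γ_ν) = γ_{s_iν} · (h̊_{i,i+1} + ν_{i+1})^{↓(ν_i+1)}/(h̊_{i,i+1})^{↓(ν_i+1)} · (h̊_{i,i+1})^{↑(ν_{i+1}+1)}/((h̊_{i,i+1} − ν_i))^{↑(ν_{i+1}+1)}, where s_iν swaps ν_i and ν_{i+1}, x^{↑a} = x(x+1)⋯(x+a−1), x^{↓a} = x(x−1)⋯(x−a+1). -/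

import Mathlib

noncomputable section

/-- The field `ℚ(h̊_1, …, h̊_n)` of rational functions. -/
abbrev HField (n : ℕ) := FractionRing (MvPolynomial (Fin n) ℚ)

/-- The generator `h̊_i` inside `ℚ(h̊_1, …, h̊_n)`. -/
def hgen (n : ℕ) (i : Fin n) : HField n :=
  algebraMap (MvPolynomial (Fin n) ℚ) (HField n) (MvPolynomial.X i)

/-- Rising Pochhammer symbol `x^{↑a} = x(x+1)⋯(x+a−1)`. -/
def pochUp {F : Type*} [Field F] (x : F) (a : ℕ) : F :=
  ∏ k ∈ Finset.range a, (x + (k : F))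

/-- Falling Pochhammer symbol `x^{↓a} = x(x−1)⋯(x−a+1)`. -/
def pochDown {F : Type*} [Field F] (x : F) (a : ℕ) : F :=
  ∏ k ∈ Finset.range a, (x - (k : F))

/-- `γ_ν = ∏_{i<j} (h̊_{ij} − ν_j)^{↑(ν_i+1)}/(h̊_{ij})^{↑(ν_i+1)}`, computed with
a given choice of the variables `h`. -/
def gammaNu (n : ℕ) (h : Fin n → HField n) (ν : Fin n → ℕ) : HField n :=
  ∏ p ∈ Finset.univ.filter (fun p : Fin n × Fin n => p.1 < p.2),
    pochUp (h p.1 - h p.2 - (ν p.2 : HField n)) (ν p.1 + 1) /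
      pochUp (h p.1 - h p.2) (ν p.1 + 1)

/-!
Write `γ_ν` as the product over pairs `a < b` of factors depending only on `h_a - h_b`, `ν_a`,
`ν_b`. Substituting `h ∘ s_i` into the factor of `(a, b)` gives the factor of `(s_i a, s_i b)` for
`ν ∘ s_i`, and the adjacent transposition `s_i` permutes the pairs `a < b` other than `(i, i+1)`,
which it sends to `(i+1, i)`. Hence `q̌_i γ_ν` is `γ_{s_i ν}` with its `(i, i+1)` factor replaced by
the `(i+1, i)` factor; negating `h_{i+1} - h_i` turns the latter into the ratio of falling
Pochhammer symbols, and the former is nonzero because `h_i - h_{i+1} + k` is a nonzero polynomial.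
-/

open Finset Equiv

section Pochhammer

variable {F : Type*} [Field F]

theorem pochUp_neg (x : F) (a : ℕ) : pochUp (-x) a = (-1) ^ a * pochDown x a := by
  have h := prod_neg (s := range a) fun k : ℕ => x - k
  rw [card_range] at h
  rw [pochUp, pochDown, ← h]
  exact prod_congr rfl fun k _ => by ring

theorem pochUp_neg_div_pochUp_neg (x y : F) (a : ℕ) :
    pochUp (-x) a / pochUp (-y) a = pochDown x a / pochDown y a := by
  rw [pochUp_neg, pochUp_neg, mul_div_mul_left _ _ (pow_ne_zero _ (neg_ne_zero.2 one_ne_zero))]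

theorem pochUp_ne_zero {x : F} (hx : ∀ k : ℕ, x + k ≠ 0) (a : ℕ) : pochUp x a ≠ 0 :=
  prod_ne_zero_iff.2 fun k _ => hx k

end Pochhammer

section AdjacentSwap

variable {α : Type*} [LinearOrder α] {i j : α}

theorem swap_apply_lt_swap_apply_of_covBy (hij : i ⋖ j) {a b : α} (hab : a < b)
    (hne : (a, b) ≠ (i, j)) : swap i j a < swap i j b := by
  rw [swap_apply_def, swap_apply_def]
  split_ifs with ha hb hb' hb hb' <;> subst_vars
  · exact absurd hab (lt_irrefl _)
  · exact absurd rfl hne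
  · exact lt_of_le_of_ne (hij.ge_of_gt hab) (Ne.symm hb')
  · exact absurd (hij.lt.trans hab) (lt_irrefl _)
  · exact absurd hab (lt_irrefl _)
  · exact hij.lt.trans hab
  · exact hab.trans hij.lt
  · exact lt_of_le_of_ne (hij.le_of_lt hab) ha
  · exact hab

variable [Fintype α] {M : Type*} [CommMonoid M]

theorem prod_ltPairs_erase_swap (hij : i ⋖ j) (f : α × α → M) :
    ∏ p ∈ ({p : α × α | p.1 < p.2} : Finset _).erase (i, j), f (swap i j p.1, swap i j p.2) =
      ∏ p ∈ ({p : α × α | p.1 < p.2} : Finset _).erase (i, j), f p := by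
  have hmaps : ∀ p ∈ ({p : α × α | p.1 < p.2} : Finset _).erase (i, j),
      (swap i j p.1, swap i j p.2) ∈ ({p : α × α | p.1 < p.2} : Finset _).erase (i, j) := by
    rintro ⟨a, b⟩ hp
    simp only [mem_erase, mem_filter, mem_univ, true_and] at hp ⊢
    refine ⟨fun h => ?_, swap_apply_lt_swap_apply_of_covBy hij hp.2 hp.1⟩
    rw [Prod.mk.injEq, swap_apply_eq_iff, swap_apply_eq_iff, swap_apply_left,
      swap_apply_right] at h
    obtain ⟨rfl, rfl⟩ := h
    exact lt_asymm hij.lt hp.2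
  exact prod_nbij' _ _ hmaps hmaps (fun p _ => by simp) (fun p _ => by simp) fun _ _ => rfl

theorem prod_ltPairs_swap_mul (hij : i ⋖ j) (f : α × α → M) :
    (∏ p ∈ ({p : α × α | p.1 < p.2} : Finset _), f (swap i j p.1, swap i j p.2)) * f (i, j) =
      (∏ p ∈ ({p : α × α | p.1 < p.2} : Finset _), f p) * f (j, i) := by
  have hmem : (i, j) ∈ ({p : α × α | p.1 < p.2} : Finset _) := by simpa using hij.lt
  rw [← mul_prod_erase _ _ hmem, ← mul_prod_erase _ _ hmem, prod_ltPairs_erase_swap hij,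
    swap_apply_left, swap_apply_right]
  ac_rfl

end AdjacentSwap

section Gamma

variable {ι F : Type*} [Field F]

def gammaFactor (h : ι → F) (ν : ι → ℕ) (p : ι × ι) : F :=
  pochUp (h p.1 - h p.2 - ν p.2) (ν p.1 + 1) / pochUp (h p.1 - h p.2) (ν p.1 + 1)

theorem gammaNu_eq_prod_gammaFactor (n : ℕ) (h : Fin n → HField n) (ν : Fin n → ℕ) :
    gammaNu n h ν = ∏ p ∈ ({p : Fin n × Fin n | p.1 < p.2} : Finset _), gammaFactor h ν p :=
  rfl

theorem gammaFactor_comp_perm (h : ι → F) (ν : ι → ℕ) (σ : Perm ι) (p : ι × ι) :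
    gammaFactor (h ∘ σ) ν p = gammaFactor h (ν ∘ σ.symm) (σ p.1, σ p.2) := by
  simp [gammaFactor]

theorem gammaFactor_swap (h : ι → F) (ν : ι → ℕ) (a b : ι) :
    gammaFactor h ν (b, a) =
      pochDown (h a - h b + ν a) (ν b + 1) / pochDown (h a - h b) (ν b + 1) := by
  rw [gammaFactor, ← pochUp_neg_div_pochUp_neg, neg_add', neg_sub]

theorem gammaFactor_ne_zero {h : ι → F} (ν : ι → ℕ) {a b : ι}
    (hab : ∀ k : ℤ, h a - h b + k ≠ 0) : gammaFactor h ν (a, b) ≠ 0 := by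
  refine div_ne_zero (pochUp_ne_zero (fun k => ?_) _) (pochUp_ne_zero (fun k => ?_) _)
  · convert hab (k - ν b) using 1
    push_cast
    ring
  · exact_mod_cast hab k

end Gamma

open MvPolynomial in
theorem hgen_sub_hgen_add_intCast_ne_zero {n : ℕ} {i j : Fin n} (hne : i ≠ j) (k : ℤ) :
    hgen n i - hgen n j + k ≠ 0 := by
  have hpoly : X i - X j + (k : MvPolynomial (Fin n) ℚ) ≠ 0 := fun h0 => by
    simpa [hne.symm] using congrArg (eval fun t => if t = i then 1 - (k : ℚ) else 0) h0
  have hmap : algebraMap _ (HField n) (X i - X j + (k : MvPolynomial (Fin n) ℚ)) =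
      hgen n i - hgen n j + k := by
    simp [hgen]
  rw [← hmap]
  exact (map_ne_zero_iff _ (IsFractionRing.injective _ _)).2 hpoly

/-- covariance of `γ_ν` under the Zhelobenko substitution `q̌_i`
(swap of `h̊_i ↔ h̊_{i+1}`):
`q̌_i(γ_ν) = γ_{s_iν} · (h̊_{i,i+1}+ν_{i+1})^{↓(ν_i+1)}/(h̊_{i,i+1})^{↓(ν_i+1)} ·
(h̊_{i,i+1})^{↑(ν_{i+1}+1)}/(h̊_{i,i+1}−ν_i)^{↑(ν_{i+1}+1)}`. -/
theorem gamma_covariance (n : ℕ) (ν : Fin n → ℕ)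
    (i j : Fin n) (hij : (j : ℕ) = (i : ℕ) + 1) :
    gammaNu n (hgen n ∘ (Equiv.swap i j)) ν =
      gammaNu n (hgen n) (ν ∘ (Equiv.swap i j)) *
        (pochDown (hgen n i - hgen n j + (ν j : HField n)) (ν i + 1) /
          pochDown (hgen n i - hgen n j) (ν i + 1)) *
        (pochUp (hgen n i - hgen n j) (ν j + 1) /
          pochUp (hgen n i - hgen n j - (ν i : HField n)) (ν j + 1)) := by
  have hcov : i ⋖ j := ⟨Fin.lt_def.2 (by omega), fun c h1 h2 => by
    rw [Fin.lt_def] at h1 h2; omega⟩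
  have hne : gammaFactor (hgen n) (ν ∘ swap i j) (i, j) ≠ 0 :=
    gammaFactor_ne_zero _ (hgen_sub_hgen_add_intCast_ne_zero hcov.ne)
  have hprod := prod_ltPairs_swap_mul hcov (gammaFactor (hgen n) (ν ∘ swap i j))
  rw [gammaNu_eq_prod_gammaFactor, gammaNu_eq_prod_gammaFactor]
  simp_rw [gammaFactor_comp_perm, symm_swap]
  rw [eq_div_of_mul_eq hne hprod, gammaFactor_swap, gammaFactor, div_div_eq_mul_div, mul_div_assoc]
  simp

end
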